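/- Let α, τ ∈ ℝ and let u, v : ℝ × ℝ → ℝ be smooth functions solving the Whitham–Broer–Kaup system at every (x,t) ∈ ℝ². Then at every (x,t) ∈ ℝ²: ∂ₜ(x·v − t·uv) + ∂ₓ(−t·u²v + αt·u·∂ₓv − αt·(∂ₓu)·v − ½t·v² + x·uv − τt·u·∂ₓₓu + ½τt·(∂ₓu)² − τ·∂ₓu + τx·∂ₓₓu + αv − αx·∂ₓv) = 0. -/

import Mathlib

/-- Partial derivative with respect to the first (space) variable. -/
noncomputable def px (f : ℝ → ℝ → ℝ) : ℝ → ℝ → ℝ := fun x t => deriv (fun y => f y t) x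

/-- Partial derivative with respect to the second (time) variable. -/
noncomputable def pt (f : ℝ → ℝ → ℝ) : ℝ → ℝ → ℝ := fun x t => deriv (fun s => f x s) t

/-- Smoothness of a function of two real variables. -/
def Smooth2 (f : ℝ → ℝ → ℝ) : Prop := ContDiff ℝ (⊤ : ℕ∞) (Function.uncurry f)

/-- Residual of the first Whitham–Broer–Kaup equation:
`u_t + u u_x + v_x + α u_xx`. -/
noncomputable def wbk1 (α : ℝ) (u v : ℝ → ℝ → ℝ) : ℝ → ℝ → ℝ :=
  fun x t => pt u x t + u x t * px u x t + px v x t + α * px (px u) x t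

/-- Residual of the second Whitham–Broer–Kaup equation:
`v_t + (u v)_x + τ u_xxx − α v_xx`. -/
noncomputable def wbk2 (α τ : ℝ) (u v : ℝ → ℝ → ℝ) : ℝ → ℝ → ℝ :=
  fun x t => pt v x t + px (fun a b => u a b * v a b) x t
    + τ * px (px (px u)) x t - α * px (px v) x t

/-- The Whitham–Broer–Kaup system holds at every point of `ℝ²`. -/
def WBK (α τ : ℝ) (u v : ℝ → ℝ → ℝ) : Prop :=
  ∀ x t : ℝ, wbk1 α u v x t = 0 ∧ wbk2 α τ u v x t = 0

lemma hasDerivAt_px {f : ℝ → ℝ → ℝ} (hf : Smooth2 f) (x t : ℝ) :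
    HasDerivAt (fun y => f y t) (px f x t) x := by
  have h1 : DifferentiableAt ℝ (fun y => f y t) x :=
    ((hf.differentiable (by simp) (x, t)).comp x
      (DifferentiableAt.prodMk differentiableAt_fun_id (differentiableAt_const t)) :
      DifferentiableAt ℝ (Function.uncurry f ∘ fun y => (y, t)) x)
  exact h1.hasDerivAt

lemma hasDerivAt_pt {f : ℝ → ℝ → ℝ} (hf : Smooth2 f) (x t : ℝ) :
    HasDerivAt (fun s => f x s) (pt f x t) t := by
  have h1 : DifferentiableAt ℝ (fun s => f x s) t :=
    (hf.differentiable (by simp) (x, t)).comp t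
      (DifferentiableAt.prodMk (differentiableAt_const x) differentiableAt_fun_id)
  exact h1.hasDerivAt

lemma smooth2_px {f : ℝ → ℝ → ℝ} (hf : Smooth2 f) : Smooth2 (px f) := by
  have key : ∀ p : ℝ × ℝ, px f p.1 p.2
      = fderiv ℝ (Function.uncurry f) p ((1 : ℝ), (0 : ℝ)) := by
    intro p
    have h1 : HasFDerivAt (Function.uncurry f) (fderiv ℝ (Function.uncurry f) p) p :=
      (hf.differentiable (by simp) p).hasFDerivAt
    have h2 : HasDerivAt (fun y : ℝ => (y, p.2)) ((1 : ℝ), (0 : ℝ)) p.1 :=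
      (hasDerivAt_id p.1).prodMk (hasDerivAt_const p.1 p.2)
    have h3 := h1.comp_hasDerivAt p.1 h2
    exact h3.deriv
  have : Function.uncurry (px f)
      = fun p => fderiv ℝ (Function.uncurry f) p ((1 : ℝ), (0 : ℝ)) := by
    funext p
    exact key p
  rw [Smooth2, this]
  exact (hf.fderiv_right (by simp)).clm_apply contDiff_const

/-- Fourth local conservation law of Theorem 7, with conserved density
`x v − t u v`. -/
theorem wbk_conservation_law_txv (α τ : ℝ) (u v : ℝ → ℝ → ℝ)
    (hu : Smooth2 u) (hv : Smooth2 v) (h : WBK α τ u v) (x t : ℝ) :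
    pt (fun a b => a * v a b - b * (u a b * v a b)) x t
      + px (fun a b => -b * (u a b) ^ 2 * v a b + α * b * u a b * px v a b
          - α * b * px u a b * v a b - (1 / 2) * b * (v a b) ^ 2
          + a * (u a b * v a b) - τ * b * u a b * px (px u) a b
          + (1 / 2) * τ * b * (px u a b) ^ 2 - τ * px u a b
          + τ * a * px (px u) a b + α * v a b - α * a * px v a b) x t = 0 := by
  have hux : Smooth2 (px u) := smooth2_px hu
  have huxx : Smooth2 (px (px u)) := smooth2_px hux
  have hvx : Smooth2 (px v) := smooth2_px hv
  have hU := hasDerivAt_px hu x t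
  have hUx := hasDerivAt_px hux x t
  have hUxx := hasDerivAt_px huxx x t
  have hV := hasDerivAt_px hv x t
  have hVx := hasDerivAt_px hvx x t
  have hUt := hasDerivAt_pt hu x t
  have hVt := hasDerivAt_pt hv x t
  -- time derivative of the density
  have hD := (hVt.const_mul x).sub ((hasDerivAt_id t).mul (hUt.mul hVt))
  have e1 : pt (fun a b => a * v a b - b * (u a b * v a b)) x t = _ := hD.deriv
  -- space derivative of the flux
  have h1 := ((hU.pow 2).const_mul (-t)).mul hV
  have h2 := (hU.const_mul (α * t)).mul hVx
  have h3 := (hUx.const_mul (α * t)).mul hV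
  have h4 := (hV.pow 2).const_mul ((1 / 2) * t)
  have h5 := (hasDerivAt_id x).mul (hU.mul hV)
  have h6 := (hU.const_mul (τ * t)).mul hUxx
  have h7 := (hUx.pow 2).const_mul ((1 / 2) * τ * t)
  have h8 := hUx.const_mul τ
  have h9 := ((hasDerivAt_id x).const_mul τ).mul hUxx
  have h10 := hV.const_mul α
  have h11 := ((hasDerivAt_id x).const_mul α).mul hVx
  have hF := (((((((((h1.add h2).sub h3).sub h4).add h5).sub h6).add h7).sub h8).add
    h9).add h10).sub h11
  have e2 : px (fun a b => -b * (u a b) ^ 2 * v a b + α * b * u a b * px v a b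
          - α * b * px u a b * v a b - (1 / 2) * b * (v a b) ^ 2
          + a * (u a b * v a b) - τ * b * u a b * px (px u) a b
          + (1 / 2) * τ * b * (px u a b) ^ 2 - τ * px u a b
          + τ * a * px (px u) a b + α * v a b - α * a * px v a b) x t = _ := hF.deriv
  rw [e1, e2]
  have w1 := (h x t).1
  have w2 := (h x t).2
  rw [wbk1] at w1
  rw [wbk2] at w2
  have hprod : px (fun a b => u a b * v a b) x t = _ := (hU.mul hV).deriv
  rw [hprod] at w2
  simp only [id_eq, Pi.pow_apply]
  push_cast
  linear_combination (-(t * v x t)) * w1 + (x - t * u x t) * w2
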